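/- Let ψ_1,…,ψ_N : ℝ^d → ℂ be measurable with Re ψ_j(ξ) ≤ 0 for all ξ, j and |ψ_j(ξ)| ≤ C(1 + |ξ|²) for some C > 0. Let b = (b_1,…,b_N) ∈ [0,∞)^N and let φ be a measure on [0,∞)^N with ∫ min(|z|, 1) φ(dz) < ∞. For a Schwartz function h : ℝ^d → ℂ, z ∈ [0,∞)^N and x ∈ ℝ^d, define T_z h(x) = (2π)^{−d/2} ∫ e^{i⟨ξ,x⟩} exp(Σ_j z_j ψ_j(ξ)) ĥ(ξ) dξ, G_j h(x) = (2π)^{−d/2} ∫ e^{i⟨ξ,x⟩} ψ_j(ξ) ĥ(ξ) dξ, and S(−Ψ(ξ)) = −Σ_j b_j ψ_j(ξ) + ∫_{[0,∞)^N} (1 − exp(Σ_j z_j ψ_j(ξ))) φ(dz). Then all the integrals involved converge absolutely and, for every x ∈ ℝ^d, −(2π)^{−d/2} ∫_{ℝ^d} e^{i⟨ξ,x⟩} S(−Ψ(ξ)) ĥ(ξ) dξ = Σ_{j=1}^N b_j G_j h(x) + ∫_{[0,∞)^N} (T_z h(x) − h(x)) φ(dz). (Theorem 3.8: multiparameter Phillips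 formula — each component of the generator of the subordinated field equals b·G h + ∫(T_z h − h) φ(dz).) -/

import Mathlib

/-!
Put `F(z, ξ) = e^{i⟨ξ,x⟩} (1 − e^{⟨z,Ψ(ξ)⟩}) ĥ(ξ)`. Since `Re ⟨z,Ψ(ξ)⟩ ≤ 0` for `z ≥ 0`,
`|1 − e^{⟨z,Ψ(ξ)⟩}| ≤ 2 min(|⟨z,Ψ(ξ)⟩|, 1) ≤ K min(|z|, 1) (1 + |ξ|²)`, so `|F|` is dominated by the
product of the `φ`-integrable `min(|z|, 1)` and the Lebesgue-integrable `(1 + |ξ|²) |ĥ(ξ)|`.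
By Fourier inversion the `ξ`-integral of `F(z, ·)` is `−(2π)^{d/2} (T_z h − h)(x)`, while the
`z`-integral of `F(·, ξ)` is `e^{i⟨ξ,x⟩}` times the jump part of `S(−Ψ(ξ))` times `ĥ(ξ)`; Fubini
exchanges the two, and the drift part `−∑ b_j ψ_j` of `S(−Ψ)` gives `∑ b_j G_j h`.
Fubini applies although `φ` need not be σ-finite: `min(|z|, 1)` is integrable, hence vanishes off a
set on which `φ` is σ-finite, and by the domination so does `F`.
-/

open MeasureTheory
open scoped RealInnerProductSpace

/-- The Fourier transform `ĥ(ξ) = (2π)^{-d/2} ∫ e^{-i⟨ξ,y⟩} h(y) dy`. -/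
noncomputable def fourierT {d : ℕ} (h : EuclideanSpace ℝ (Fin d) → ℂ)
    (ξ : EuclideanSpace ℝ (Fin d)) : ℂ :=
  (((2 * Real.pi) ^ (-(d : ℝ) / 2) : ℝ) : ℂ) *
    ∫ y, Complex.exp (-Complex.I * (⟪ξ, y⟫ : ℂ)) * h y

/-- The semigroup `T_z h(x) = (2π)^{-d/2} ∫ e^{i⟨ξ,x⟩} exp(∑_j z_j ψ_j(ξ)) ĥ(ξ) dξ`. -/
noncomputable def Tz {d N : ℕ} (ψ : Fin N → EuclideanSpace ℝ (Fin d) → ℂ)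
    (h : EuclideanSpace ℝ (Fin d) → ℂ) (z : Fin N → ℝ)
    (x : EuclideanSpace ℝ (Fin d)) : ℂ :=
  (((2 * Real.pi) ^ (-(d : ℝ) / 2) : ℝ) : ℂ) *
    ∫ ξ, Complex.exp (Complex.I * (⟪ξ, x⟫ : ℂ)) *
      Complex.exp (∑ j, (z j : ℂ) * ψ j ξ) * fourierT h ξ

/-- The generator `G_j h(x) = (2π)^{-d/2} ∫ e^{i⟨ξ,x⟩} ψ_j(ξ) ĥ(ξ) dξ`. -/
noncomputable def Gj {d N : ℕ} (ψ : Fin N → EuclideanSpace ℝ (Fin d) → ℂ)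
    (h : EuclideanSpace ℝ (Fin d) → ℂ) (j : Fin N)
    (x : EuclideanSpace ℝ (Fin d)) : ℂ :=
  (((2 * Real.pi) ^ (-(d : ℝ) / 2) : ℝ) : ℂ) *
    ∫ ξ, Complex.exp (Complex.I * (⟪ξ, x⟫ : ℂ)) * ψ j ξ * fourierT h ξ

/-- The multivariate Bernstein function evaluated at `−Ψ(ξ)`:
`S(−Ψ(ξ)) = −∑_j b_j ψ_j(ξ) + ∫ (1 − exp(∑_j z_j ψ_j(ξ))) φ(dz)`. -/
noncomputable def SofPsi {d N : ℕ} (ψ : Fin N → EuclideanSpace ℝ (Fin d) → ℂ)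
    (b : Fin N → ℝ) (φ : Measure (Fin N → ℝ))
    (ξ : EuclideanSpace ℝ (Fin d)) : ℂ :=
  (-∑ j, (b j : ℂ) * ψ j ξ) +
    ∫ z, (1 - Complex.exp (∑ j, (z j : ℂ) * ψ j ξ)) ∂φ

open FourierTransform Real

section DominatedFubini

variable {α β E : Type*} [MeasurableSpace α] [NormedAddCommGroup E] {μ : Measure α}
  {F : α → β → E} {v : α → ℝ} {w : β → ℝ}

theorem ae_forall_eq_zero_of_norm_le_mul (hFvw : ∀ᵐ a ∂μ, ∀ b, ‖F a b‖ ≤ v a * w b) :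
    ∀ᵐ a ∂μ, v a = 0 → ∀ b, F a b = 0 :=
  hFvw.mono fun a ha hva b => norm_le_zero_iff.1 (by simpa [hva] using ha b)

variable [MeasurableSpace β] {ν : Measure β}

theorem integrable_uncurry_restrict_sigmaFiniteSet (hF : StronglyMeasurable (Function.uncurry F))
    (hv : Integrable v μ) (hw : Integrable w ν) (hFvw : ∀ᵐ a ∂μ, ∀ b, ‖F a b‖ ≤ v a * w b) :
    Integrable (Function.uncurry F)
      ((μ.restrict hv.aefinStronglyMeasurable.sigmaFiniteSet).prod ν) :=
  (hv.restrict.mul_prod hw).mono' hF.aestronglyMeasurable <|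
    (Measure.quasiMeasurePreserving_fst.tendsto_ae.eventually
      (p := fun a => ∀ b, ‖F a b‖ ≤ v a * w b) (ae_restrict_of_ae hFvw)).mono fun p hp => hp p.2

variable [NormedSpace ℝ E]

theorem setIntegral_sigmaFiniteSet_eq_integral (hv : Integrable v μ) {f : α → E}
    (hf : ∀ᵐ a ∂μ, v a = 0 → f a = 0) :
    ∫ a in hv.aefinStronglyMeasurable.sigmaFiniteSet, f a ∂μ = ∫ a, f a ∂μ := by
  have hv0 := hv.aefinStronglyMeasurable.ae_eq_zero_compl
  rw [Filter.EventuallyEq, ae_restrict_iff' hv.aefinStronglyMeasurable.measurableSet.compl] at hv0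
  refine setIntegral_eq_integral_of_ae_compl_eq_zero ?_
  filter_upwards [hv0, hf] with a hva hfa hat using hfa (hva hat)

variable [SFinite ν]

theorem integrable_integral_right_of_norm_le_mul (hF : StronglyMeasurable (Function.uncurry F))
    (hv : Integrable v μ) (hw : Integrable w ν) (hFvw : ∀ᵐ a ∂μ, ∀ b, ‖F a b‖ ≤ v a * w b) :
    Integrable (fun a => ∫ b, F a b ∂ν) μ := by
  refine (hv.mul_const (∫ b, w b ∂ν)).mono' hF.integral_prod_right'.aestronglyMeasurable ?_
  filter_upwards [hFvw] with a ha
  rw [← integral_const_mul]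
  exact norm_integral_le_of_norm_le (hw.const_mul _) (.of_forall ha)

theorem integrable_integral_left_of_norm_le_mul (hF : StronglyMeasurable (Function.uncurry F))
    (hv : Integrable v μ) (hw : Integrable w ν) (hFvw : ∀ᵐ a ∂μ, ∀ b, ‖F a b‖ ≤ v a * w b) :
    Integrable (fun b => ∫ a, F a b ∂μ) ν :=
  (integrable_uncurry_restrict_sigmaFiniteSet hF hv hw hFvw).integral_prod_right.congr <|
    .of_forall fun b => setIntegral_sigmaFiniteSet_eq_integral hv <|
      (ae_forall_eq_zero_of_norm_le_mul hFvw).mono fun _ ha hva => ha hva b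

theorem integral_integral_swap_of_norm_le_mul (hF : StronglyMeasurable (Function.uncurry F))
    (hv : Integrable v μ) (hw : Integrable w ν) (hFvw : ∀ᵐ a ∂μ, ∀ b, ‖F a b‖ ≤ v a * w b) :
    ∫ a, ∫ b, F a b ∂ν ∂μ = ∫ b, ∫ a, F a b ∂μ ∂ν := by
  have hF0 := ae_forall_eq_zero_of_norm_le_mul hFvw
  have hswap := integral_integral_swap (integrable_uncurry_restrict_sigmaFiniteSet hF hv hw hFvw)
  rw [setIntegral_sigmaFiniteSet_eq_integral hv
    (hF0.mono fun a ha hva => by simp [ha hva])] at hswap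
  rw [hswap]
  exact integral_congr_ae <| .of_forall fun b =>
    setIntegral_sigmaFiniteSet_eq_integral hv (hF0.mono fun _ ha hva => ha hva b)

end DominatedFubini

theorem Complex.norm_one_sub_exp_le {w : ℂ} (hw : w.re ≤ 0) : ‖1 - exp w‖ ≤ 2 * min ‖w‖ 1 := by
  rcases le_total ‖w‖ 1 with hw1 | hw1
  · rw [min_eq_left hw1, norm_sub_rev]
    exact norm_exp_sub_one_le hw1
  · have : ‖exp w‖ ≤ 1 := by rw [norm_exp]; exact Real.exp_le_one_iff.2 hw
    rw [min_eq_right hw1]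
    linarith [norm_sub_le (1 : ℂ) (exp w), norm_one (α := ℂ)]

theorem Finset.sum_abs_le_sqrt_card_mul_sqrt_sum_sq {ι : Type*} (s : Finset ι) (f : ι → ℝ) :
    ∑ i ∈ s, |f i| ≤ √(s.card : ℝ) * √(∑ i ∈ s, f i ^ 2) := by
  rw [← Real.sqrt_mul (Nat.cast_nonneg _)]
  refine Real.le_sqrt_of_sq_le ?_
  simpa only [sq_abs] using sq_sum_le_card_mul_sum_sq (s := s) (f := fun i => |f i|)

theorem norm_one_sub_exp_sum_le {ι : Type*} [Fintype ι] {z : ι → ℝ} {u : ι → ℂ} {M : ℝ}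
    (hz : ∀ i, 0 ≤ z i) (hu_re : ∀ i, (u i).re ≤ 0) (hM : 0 ≤ M) (hu : ∀ i, ‖u i‖ ≤ M) :
    ‖1 - Complex.exp (∑ i, (z i : ℂ) * u i)‖ ≤
      min √(∑ i, z i ^ 2) 1 * (2 * (1 + √(Fintype.card ι) * M)) := by
  set r := √(∑ i, z i ^ 2)
  set A := √(Fintype.card ι) * M
  have hA : 0 ≤ A := by positivity
  have hre : (∑ i, (z i : ℂ) * u i).re ≤ 0 := by
    simp only [Complex.re_sum, Complex.re_ofReal_mul]
    exact Finset.sum_nonpos fun i _ => mul_nonpos_of_nonneg_of_nonpos (hz i) (hu_re i)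
  have hnorm : ‖∑ i, (z i : ℂ) * u i‖ ≤ A * r :=
    calc ‖∑ i, (z i : ℂ) * u i‖ ≤ ∑ i, |z i| * M := by
          refine (norm_sum_le _ _).trans (Finset.sum_le_sum fun i _ => ?_)
          rw [norm_mul, Complex.norm_real, Real.norm_eq_abs]
          exact mul_le_mul_of_nonneg_left (hu i) (abs_nonneg _)
      _ ≤ √(Fintype.card ι) * r * M := by
          rw [← Finset.sum_mul]
          exact mul_le_mul_of_nonneg_right
            (Finset.sum_abs_le_sqrt_card_mul_sqrt_sum_sq Finset.univ z) hM
      _ = A * r := by ring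
  have hmin : min (A * r) 1 ≤ min r 1 * (1 + A) := by
    rcases le_total r 1 with hr | hr
    · rw [min_eq_left hr]
      exact (min_le_left _ _).trans (by nlinarith [Real.sqrt_nonneg (∑ i, z i ^ 2)])
    · rw [min_eq_right hr]
      exact (min_le_right _ _).trans (by linarith)
  calc ‖1 - Complex.exp (∑ i, (z i : ℂ) * u i)‖
      ≤ 2 * min ‖∑ i, (z i : ℂ) * u i‖ 1 := Complex.norm_one_sub_exp_le hre
    _ ≤ 2 * min (A * r) 1 := by gcongr
    _ ≤ min r 1 * (2 * (1 + A)) := by linarith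

section Fourier

variable {d : ℕ}

theorem fourierT_eq_fourier (h : EuclideanSpace ℝ (Fin d) → ℂ) (ξ : EuclideanSpace ℝ (Fin d)) :
    fourierT h ξ = (((2 * π) ^ (-(d : ℝ) / 2) : ℝ) : ℂ) * 𝓕 h ((2 * π)⁻¹ • ξ) := by
  rw [fourierT, Real.fourier_eq']
  congr 1
  refine integral_congr_ae (.of_forall fun y => ?_)
  simp only [real_inner_smul_right, real_inner_comm y ξ, smul_eq_mul]
  push_cast
  field_simp

noncomputable def fourierTSchwartz (h : SchwartzMap (EuclideanSpace ℝ (Fin d)) ℂ) :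
    SchwartzMap (EuclideanSpace ℝ (Fin d)) ℂ :=
  (((2 * π) ^ (-(d : ℝ) / 2) : ℝ) : ℂ) • SchwartzMap.compCLMOfContinuousLinearEquiv ℂ
    (ContinuousLinearEquiv.smulLeft (Units.mk0 (2 * π)⁻¹ (by positivity))) (𝓕 h)

theorem coe_fourierTSchwartz (h : SchwartzMap (EuclideanSpace ℝ (Fin d)) ℂ) :
    ⇑(fourierTSchwartz h) = fourierT (fun y => h y) := by
  ext ξ
  rw [fourierT_eq_fourier]
  rfl

@[fun_prop]
theorem continuous_fourierT (h : SchwartzMap (EuclideanSpace ℝ (Fin d)) ℂ) :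
    Continuous (fourierT (fun y => h y)) :=
  coe_fourierTSchwartz h ▸ (fourierTSchwartz h).continuous

theorem integrable_fourierT (h : SchwartzMap (EuclideanSpace ℝ (Fin d)) ℂ) :
    Integrable (fourierT (fun y => h y)) :=
  coe_fourierTSchwartz h ▸ (fourierTSchwartz h).integrable

theorem integrable_one_add_sq_mul_norm_fourierT (h : SchwartzMap (EuclideanSpace ℝ (Fin d)) ℂ) :
    Integrable (fun ξ => (1 + ‖ξ‖ ^ 2) * ‖fourierT (fun y => h y) ξ‖) := by
  simp only [← coe_fourierTSchwartz, add_mul, one_mul]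
  exact (fourierTSchwartz h).integrable.norm.add ((fourierTSchwartz h).integrable_pow_mul _ 2)

theorem fourierT_inversion (h : SchwartzMap (EuclideanSpace ℝ (Fin d)) ℂ)
    (x : EuclideanSpace ℝ (Fin d)) :
    (((2 * π) ^ (-(d : ℝ) / 2) : ℝ) : ℂ) *
      ∫ ξ, Complex.exp (Complex.I * (⟪ξ, x⟫ : ℂ)) * fourierT (fun y => h y) ξ = h x := by
  set c : ℝ := (2 * π) ^ (-(d : ℝ) / 2)
  set g : EuclideanSpace ℝ (Fin d) → ℂ :=
    fun u => Complex.exp (Complex.I * (⟪(2 * π) • u, x⟫ : ℂ)) * 𝓕 (fun y => h y) u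
  have hg : ∀ ξ, Complex.exp (Complex.I * (⟪ξ, x⟫ : ℂ)) * fourierT (fun y => h y) ξ =
      c * g ((2 * π)⁻¹ • ξ) := by
    intro ξ
    simp only [g, fourierT_eq_fourier, smul_inv_smul₀ two_pi_pos.ne']
    ring
  have hinv : ∫ u, g u = h x := by
    rw [← h.continuous.fourierInv_fourier_eq h.integrable (𝓕 h).integrable, Real.fourierInv_eq']
    refine integral_congr_ae (.of_forall fun u => ?_)
    simp only [g, real_inner_smul_left, smul_eq_mul]
    push_cast
    ring_nf
  have hc : c * c * (2 * π) ^ d = 1 := by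
    rw [← Real.rpow_add two_pi_pos, ← Real.rpow_natCast, ← Real.rpow_add two_pi_pos]
    norm_num
  simp_rw [hg, integral_const_mul, Measure.integral_comp_inv_smul, hinv,
    finrank_euclideanSpace_fin, abs_of_pos (pow_pos two_pi_pos d), Complex.real_smul, ← mul_assoc,
    ← Complex.ofReal_mul, hc]
  simp

end Fourier

theorem integrable_min_sqrt_sum_sq_one {ι : Type*} [Fintype ι] {φ : Measure (ι → ℝ)}
    (hφint : ∫⁻ z, ENNReal.ofReal (min √(∑ j, z j ^ 2) 1) ∂φ < ⊤) :
    Integrable (fun z => min √(∑ j, z j ^ 2) 1) φ :=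
  ⟨(by fun_prop : Continuous _).aestronglyMeasurable,
    (hasFiniteIntegral_iff_ofReal (.of_forall fun _ => by positivity)).2 hφint⟩

section Phillips

variable {d N : ℕ} {ψ : Fin N → EuclideanSpace ℝ (Fin d) → ℂ} {C : ℝ}

noncomputable def phillipsIntegrand (ψ : Fin N → EuclideanSpace ℝ (Fin d) → ℂ)
    (h : EuclideanSpace ℝ (Fin d) → ℂ) (x : EuclideanSpace ℝ (Fin d)) (z : Fin N → ℝ)
    (ξ : EuclideanSpace ℝ (Fin d)) : ℂ :=
  Complex.exp (Complex.I * (⟪ξ, x⟫ : ℂ)) * (1 - Complex.exp (∑ j, (z j : ℂ) * ψ j ξ)) *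
    fourierT h ξ

theorem stronglyMeasurable_uncurry_phillipsIntegrand (hψmeas : ∀ j, Measurable (ψ j))
    (h : SchwartzMap (EuclideanSpace ℝ (Fin d)) ℂ) (x : EuclideanSpace ℝ (Fin d)) :
    StronglyMeasurable (Function.uncurry (phillipsIntegrand ψ (fun y => h y) x)) := by
  have hH := (continuous_fourierT h).measurable
  unfold phillipsIntegrand Function.uncurry
  fun_prop

theorem norm_one_sub_exp_sum_psi_le (hre : ∀ j ξ, (ψ j ξ).re ≤ 0) (hC : 0 ≤ C)
    (hbound : ∀ j ξ, ‖ψ j ξ‖ ≤ C * (1 + ‖ξ‖ ^ 2)) {z : Fin N → ℝ} (hz : ∀ j, 0 ≤ z j)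
    (ξ : EuclideanSpace ℝ (Fin d)) :
    ‖1 - Complex.exp (∑ j, (z j : ℂ) * ψ j ξ)‖ ≤
      min √(∑ j, z j ^ 2) 1 * (2 * (1 + √N * C) * (1 + ‖ξ‖ ^ 2)) := by
  refine (norm_one_sub_exp_sum_le hz (hre · ξ) (by positivity) (hbound · ξ)).trans ?_
  rw [Fintype.card_fin]
  refine mul_le_mul_of_nonneg_left ?_ (by positivity)
  nlinarith [mul_nonneg (Real.sqrt_nonneg (N : ℝ)) hC, sq_nonneg ‖ξ‖]

theorem integrable_one_sub_exp_sum {φ : Measure (Fin N → ℝ)} (hre : ∀ j ξ, (ψ j ξ).re ≤ 0)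
    (hC : 0 ≤ C) (hbound : ∀ j ξ, ‖ψ j ξ‖ ≤ C * (1 + ‖ξ‖ ^ 2))
    (hφsupp : ∀ᵐ z ∂φ, ∀ j, 0 ≤ z j) (hv : Integrable (fun z => min √(∑ j, z j ^ 2) 1) φ)
    (ξ : EuclideanSpace ℝ (Fin d)) :
    Integrable (fun z : Fin N → ℝ => 1 - Complex.exp (∑ j, (z j : ℂ) * ψ j ξ)) φ :=
  (hv.mul_const _).mono' (by fun_prop : Continuous _).aestronglyMeasurable
    (hφsupp.mono fun _ hz => norm_one_sub_exp_sum_psi_le hre hC hbound hz ξ)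

theorem norm_phillipsIntegrand_le (hre : ∀ j ξ, (ψ j ξ).re ≤ 0) (hC : 0 ≤ C)
    (hbound : ∀ j ξ, ‖ψ j ξ‖ ≤ C * (1 + ‖ξ‖ ^ 2)) (h : EuclideanSpace ℝ (Fin d) → ℂ)
    (x : EuclideanSpace ℝ (Fin d)) {z : Fin N → ℝ} (hz : ∀ j, 0 ≤ z j)
    (ξ : EuclideanSpace ℝ (Fin d)) :
    ‖phillipsIntegrand ψ h x z ξ‖ ≤
      min √(∑ j, z j ^ 2) 1 * (2 * (1 + √N * C) * ((1 + ‖ξ‖ ^ 2) * ‖fourierT h ξ‖)) := by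
  rw [phillipsIntegrand, norm_mul, norm_mul, Complex.norm_exp_I_mul_ofReal, one_mul]
  calc _ ≤ min √(∑ j, z j ^ 2) 1 * (2 * (1 + √N * C) * (1 + ‖ξ‖ ^ 2)) * ‖fourierT h ξ‖ :=
        mul_le_mul_of_nonneg_right (norm_one_sub_exp_sum_psi_le hre hC hbound hz ξ) (norm_nonneg _)
    _ = _ := by ring

theorem integrable_phillipsIntegrand (hψmeas : ∀ j, Measurable (ψ j))
    (hre : ∀ j ξ, (ψ j ξ).re ≤ 0) (hC : 0 ≤ C) (hbound : ∀ j ξ, ‖ψ j ξ‖ ≤ C * (1 + ‖ξ‖ ^ 2))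
    (h : SchwartzMap (EuclideanSpace ℝ (Fin d)) ℂ) (x : EuclideanSpace ℝ (Fin d))
    {z : Fin N → ℝ} (hz : ∀ j, 0 ≤ z j) :
    Integrable (phillipsIntegrand ψ (fun y => h y) x z) :=
  (((integrable_one_add_sq_mul_norm_fourierT h).const_mul _).const_mul _).mono'
    ((stronglyMeasurable_uncurry_phillipsIntegrand hψmeas h x).measurable.comp
      measurable_prodMk_left).aestronglyMeasurable
    (.of_forall (norm_phillipsIntegrand_le hre hC hbound _ x hz))

theorem Tz_sub_self_eq (h : SchwartzMap (EuclideanSpace ℝ (Fin d)) ℂ)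
    {x : EuclideanSpace ℝ (Fin d)} {z : Fin N → ℝ}
    (hint : Integrable (phillipsIntegrand ψ (fun y => h y) x z)) :
    Tz ψ (fun y => h y) z x - h x =
      -((((2 * π) ^ (-(d : ℝ) / 2) : ℝ) : ℂ) * ∫ ξ, phillipsIntegrand ψ (fun y => h y) x z ξ) := by
  have hint₀ : Integrable fun ξ =>
      Complex.exp (Complex.I * (⟪ξ, x⟫ : ℂ)) * fourierT (fun y => h y) ξ :=
    (integrable_fourierT h).norm.mono' (by fun_prop) (.of_forall fun ξ => by
      rw [norm_mul, Complex.norm_exp_I_mul_ofReal, one_mul])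
  have hsplit : (fun ξ => Complex.exp (Complex.I * (⟪ξ, x⟫ : ℂ)) *
      Complex.exp (∑ j, (z j : ℂ) * ψ j ξ) * fourierT (fun y => h y) ξ) = fun ξ =>
      Complex.exp (Complex.I * (⟪ξ, x⟫ : ℂ)) * fourierT (fun y => h y) ξ -
        phillipsIntegrand ψ (fun y => h y) x z ξ := by
    ext ξ
    rw [phillipsIntegrand]
    ring
  conv_lhs => rw [← fourierT_inversion h x]
  rw [Tz, hsplit, integral_sub hint₀ hint]
  ring

theorem integral_phillipsIntegrand (φ : Measure (Fin N → ℝ)) (h : EuclideanSpace ℝ (Fin d) → ℂ)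
    (x ξ : EuclideanSpace ℝ (Fin d)) :
    ∫ z, phillipsIntegrand ψ h x z ξ ∂φ =
      Complex.exp (Complex.I * (⟪ξ, x⟫ : ℂ)) *
        (∫ z, (1 - Complex.exp (∑ j, (z j : ℂ) * ψ j ξ)) ∂φ) * fourierT h ξ := by
  simp only [phillipsIntegrand, integral_mul_const, integral_const_mul]

theorem mul_SofPsi_mul_eq (b : Fin N → ℝ) (φ : Measure (Fin N → ℝ))
    (h : EuclideanSpace ℝ (Fin d) → ℂ) (x ξ : EuclideanSpace ℝ (Fin d)) :
    Complex.exp (Complex.I * (⟪ξ, x⟫ : ℂ)) * SofPsi ψ b φ ξ * fourierT h ξ =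
      ∫ z, phillipsIntegrand ψ h x z ξ ∂φ -
        Complex.exp (Complex.I * (⟪ξ, x⟫ : ℂ)) * (∑ j, (b j : ℂ) * ψ j ξ) * fourierT h ξ := by
  rw [integral_phillipsIntegrand, SofPsi]
  ring

theorem integrable_mul_psi_mul_fourierT (hψmeas : ∀ j, Measurable (ψ j))
    (hbound : ∀ j ξ, ‖ψ j ξ‖ ≤ C * (1 + ‖ξ‖ ^ 2)) (h : SchwartzMap (EuclideanSpace ℝ (Fin d)) ℂ)
    (x : EuclideanSpace ℝ (Fin d)) (j : Fin N) :
    Integrable fun ξ =>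
      Complex.exp (Complex.I * (⟪ξ, x⟫ : ℂ)) * ψ j ξ * fourierT (fun y => h y) ξ := by
  refine ((integrable_one_add_sq_mul_norm_fourierT h).const_mul C).mono' (by fun_prop)
    (.of_forall fun ξ => ?_)
  rw [norm_mul, norm_mul, Complex.norm_exp_I_mul_ofReal, one_mul, ← mul_assoc]
  exact mul_le_mul_of_nonneg_right (hbound j ξ) (norm_nonneg _)

theorem mul_sum_mul_eq_sum (b : Fin N → ℝ) (h : EuclideanSpace ℝ (Fin d) → ℂ)
    (x ξ : EuclideanSpace ℝ (Fin d)) :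
    Complex.exp (Complex.I * (⟪ξ, x⟫ : ℂ)) * (∑ j, (b j : ℂ) * ψ j ξ) * fourierT h ξ =
      ∑ j, (b j : ℂ) * (Complex.exp (Complex.I * (⟪ξ, x⟫ : ℂ)) * ψ j ξ * fourierT h ξ) := by
  rw [Finset.mul_sum, Finset.sum_mul]
  exact Finset.sum_congr rfl fun j _ => by ring

theorem integrable_mul_sum_mul_fourierT (hψmeas : ∀ j, Measurable (ψ j))
    (hbound : ∀ j ξ, ‖ψ j ξ‖ ≤ C * (1 + ‖ξ‖ ^ 2)) (b : Fin N → ℝ)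
    (h : SchwartzMap (EuclideanSpace ℝ (Fin d)) ℂ) (x : EuclideanSpace ℝ (Fin d)) :
    Integrable fun ξ => Complex.exp (Complex.I * (⟪ξ, x⟫ : ℂ)) * (∑ j, (b j : ℂ) * ψ j ξ) *
      fourierT (fun y => h y) ξ := by
  simp_rw [mul_sum_mul_eq_sum]
  exact integrable_finsetSum _ fun j _ =>
    (integrable_mul_psi_mul_fourierT hψmeas hbound h x j).const_mul _

theorem sum_mul_Gj_eq (hψmeas : ∀ j, Measurable (ψ j))
    (hbound : ∀ j ξ, ‖ψ j ξ‖ ≤ C * (1 + ‖ξ‖ ^ 2)) (b : Fin N → ℝ)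
    (h : SchwartzMap (EuclideanSpace ℝ (Fin d)) ℂ) (x : EuclideanSpace ℝ (Fin d)) :
    ∑ j, (b j : ℂ) * Gj ψ (fun y => h y) j x = (((2 * π) ^ (-(d : ℝ) / 2) : ℝ) : ℂ) *
      ∫ ξ, Complex.exp (Complex.I * (⟪ξ, x⟫ : ℂ)) * (∑ j, (b j : ℂ) * ψ j ξ) *
        fourierT (fun y => h y) ξ := by
  simp_rw [mul_sum_mul_eq_sum, integral_finsetSum _ fun j _ =>
    (integrable_mul_psi_mul_fourierT hψmeas hbound h x j).const_mul _, Finset.mul_sum,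
    integral_const_mul, Gj]
  exact Finset.sum_congr rfl fun j _ => by ring

end Phillips

theorem stmt_12_general {d N : ℕ}
    (ψ : Fin N → EuclideanSpace ℝ (Fin d) → ℂ)
    (hψmeas : ∀ j, Measurable (ψ j))
    (hre : ∀ j ξ, (ψ j ξ).re ≤ 0)
    (C : ℝ) (hC : 0 < C)
    (hbound : ∀ j ξ, ‖ψ j ξ‖ ≤ C * (1 + ‖ξ‖ ^ 2))
    (b : Fin N → ℝ)
    (φ : Measure (Fin N → ℝ))
    (hφsupp : ∀ᵐ z ∂φ, ∀ j, 0 ≤ z j)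
    (hφint : ∫⁻ z, ENNReal.ofReal (min (Real.sqrt (∑ j, z j ^ 2)) 1) ∂φ < ⊤)
    (h : SchwartzMap (EuclideanSpace ℝ (Fin d)) ℂ)
    (x : EuclideanSpace ℝ (Fin d)) :
    (∀ ξ : EuclideanSpace ℝ (Fin d),
      Integrable (fun z : Fin N → ℝ =>
        1 - Complex.exp (∑ j, (z j : ℂ) * ψ j ξ)) φ) ∧
    Integrable (fun ξ : EuclideanSpace ℝ (Fin d) =>
      Complex.exp (Complex.I * (⟪ξ, x⟫ : ℂ)) * SofPsi ψ b φ ξ *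
        fourierT (fun y => h y) ξ) ∧
    Integrable (fun z : Fin N → ℝ => Tz ψ (fun y => h y) z x - h x) φ ∧
    -((((2 * Real.pi) ^ (-(d : ℝ) / 2) : ℝ) : ℂ) *
        ∫ ξ, Complex.exp (Complex.I * (⟪ξ, x⟫ : ℂ)) * SofPsi ψ b φ ξ *
          fourierT (fun y => h y) ξ) =
      (∑ j, (b j : ℂ) * Gj ψ (fun y => h y) j x) +
        ∫ z, (Tz ψ (fun y => h y) z x - h x) ∂φ := by
  have hv := integrable_min_sqrt_sum_sq_one hφint
  have hw := (integrable_one_add_sq_mul_norm_fourierT h).const_mul (2 * (1 + √N * C))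
  have hF := stronglyMeasurable_uncurry_phillipsIntegrand hψmeas h x
  have hFvw : ∀ᵐ z ∂φ, ∀ ξ, ‖phillipsIntegrand ψ (fun y => h y) x z ξ‖ ≤
      min √(∑ j, z j ^ 2) 1 * (2 * (1 + √N * C) * ((1 + ‖ξ‖ ^ 2) * ‖fourierT (fun y => h y) ξ‖)) :=
    hφsupp.mono fun z hz => norm_phillipsIntegrand_le hre hC.le hbound _ x hz
  have hTz : ∀ᵐ z ∂φ, Tz ψ (fun y => h y) z x - h x =
      -((((2 * π) ^ (-(d : ℝ) / 2) : ℝ) : ℂ) * ∫ ξ, phillipsIntegrand ψ (fun y => h y) x z ξ) :=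
    hφsupp.mono fun _ hz =>
      Tz_sub_self_eq h (integrable_phillipsIntegrand hψmeas hre hC.le hbound h x hz)
  have hjump := integrable_integral_left_of_norm_le_mul hF hv hw hFvw
  have hdrift := integrable_mul_sum_mul_fourierT hψmeas hbound b h x
  simp_rw [mul_SofPsi_mul_eq]
  refine ⟨integrable_one_sub_exp_sum hre hC.le hbound hφsupp hv, hjump.sub hdrift, ?_, ?_⟩
  · exact ((integrable_integral_right_of_norm_le_mul hF hv hw hFvw).const_mul _).neg.congr
      (hTz.mono fun _ hz => hz.symm)
  · rw [integral_sub hjump hdrift, integral_congr_ae hTz, integral_neg, integral_const_mul,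
      ← integral_integral_swap_of_norm_le_mul hF hv hw hFvw, sum_mul_Gj_eq hψmeas hbound b h x]
    ring

/-- Theorem 3.8 (multiparameter Phillips formula): all the integrals involved converge
absolutely, and the pseudo-differential operator with symbol `−S(−Ψ)` equals
`b·G h + ∫ (T_z h − h) dφ`. -/
theorem stmt_12 {d N : ℕ}
    (ψ : Fin N → EuclideanSpace ℝ (Fin d) → ℂ)
    (hψmeas : ∀ j, Measurable (ψ j))
    (hre : ∀ j ξ, (ψ j ξ).re ≤ 0)
    (C : ℝ) (hC : 0 < C)
    (hbound : ∀ j ξ, ‖ψ j ξ‖ ≤ C * (1 + ‖ξ‖ ^ 2))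
    (b : Fin N → ℝ) (hb : ∀ j, 0 ≤ b j)
    (φ : Measure (Fin N → ℝ))
    (hφsupp : ∀ᵐ z ∂φ, ∀ j, 0 ≤ z j)
    (hφint : ∫⁻ z, ENNReal.ofReal (min (Real.sqrt (∑ j, z j ^ 2)) 1) ∂φ < ⊤)
    (h : SchwartzMap (EuclideanSpace ℝ (Fin d)) ℂ)
    (x : EuclideanSpace ℝ (Fin d)) :
    (∀ ξ : EuclideanSpace ℝ (Fin d),
      Integrable (fun z : Fin N → ℝ =>
        1 - Complex.exp (∑ j, (z j : ℂ) * ψ j ξ)) φ) ∧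
    Integrable (fun ξ : EuclideanSpace ℝ (Fin d) =>
      Complex.exp (Complex.I * (⟪ξ, x⟫ : ℂ)) * SofPsi ψ b φ ξ *
        fourierT (fun y => h y) ξ) ∧
    Integrable (fun z : Fin N → ℝ => Tz ψ (fun y => h y) z x - h x) φ ∧
    -((((2 * Real.pi) ^ (-(d : ℝ) / 2) : ℝ) : ℂ) *
        ∫ ξ, Complex.exp (Complex.I * (⟪ξ, x⟫ : ℂ)) * SofPsi ψ b φ ξ *
          fourierT (fun y => h y) ξ) =
      (∑ j, (b j : ℂ) * Gj ψ (fun y => h y) j x) +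
        ∫ z, (Tz ψ (fun y => h y) z x - h x) ∂φ :=
  stmt_12_general ψ hψmeas hre C hC hbound b φ hφsupp hφint h x
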